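/- Let A be an associative algebra over a field K and N : A → A a Nijenhuis tensor. Then for all natural numbers k ≥ r ≥ 0 and all A, B in A, N^k(A ∘_{N^r} B) + N^r(A ∘_{N^k} B) = N^k(A)·N^r(B) + N^r(A)·N^k(B). Consequently all powers N^k are pairwise compatible Nijenhuis tensors, and every K-linear combination of the maps N^k, k = 0, 1, 2, …, is a Nijenhuis tensor. -/
import Mathlib


/-- The deformed product `A ∘_M B = M(A)·B + A·M(B) − M(A·B)`. -/
def circN {K A : Type*} [Field K] [NonUnitalRing A] [Module K A]
    [SMulCommClass K A A] [IsScalarTower K A A]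
    (M : A →ₗ[K] A) (a b : A) : A :=
  M a * b + a * M b - M (a * b)

/-- `M` is a Nijenhuis tensor if `M(A ∘_M B) = M(A)·M(B)` for all `A, B`. -/
def IsNijenhuis {K A : Type*} [Field K] [NonUnitalRing A] [Module K A]
    [SMulCommClass K A A] [IsScalarTower K A A]
    (M : A →ₗ[K] A) : Prop :=
  ∀ a b : A, M (circN M a b) = M a * M b

section Aux

set_option linter.unusedSectionVars false

variable {K A : Type*} [Field K] [NonUnitalRing A] [Module K A]
    [SMulCommClass K A A] [IsScalarTower K A A]

lemma pow_s (N : A →ₗ[K] A) (j : ℕ) (x : A) : (N ^ (j+1)) x = N ((N ^ j) x) := by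
  rw [pow_succ']; rfl

lemma pow_swap (N : A →ₗ[K] A) (j : ℕ) (x : A) : (N ^ j) (N x) = N ((N ^ j) x) := by
  rw [← Module.End.mul_apply, ← pow_succ, pow_succ']; rfl

lemma circN_one (a b : A) : circN (K := K) (1 : A →ₗ[K] A) a b = a * b := by
  simp [circN, Module.End.one_apply]

lemma F1 (N : A →ₗ[K] A) (hN : IsNijenhuis N) :
    ∀ m (a b : A), N (circN (N ^ (m+1)) a b) = circN (N ^ m) (N a) (N b) := by
  intro m
  induction m with
  | zero =>
    intro a b
    have h := hN a b
    simp only [circN, Nat.zero_add, pow_zero, pow_one, Module.End.one_apply] at *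
    rw [h]; abel
  | succ m ih =>
    intro a b
    have h1 := hN ((N ^ (m+1)) a) b
    have h2 := hN a ((N ^ (m+1)) b)
    have h3 := congrArg N (ih a b)
    simp only [circN, map_add, map_sub, pow_s, pow_swap] at h1 h2 h3 ⊢
    linear_combination (norm := abel1) h1 + h2 + h3

lemma Fiter (N : A →ₗ[K] A) (hN : IsNijenhuis N) :
    ∀ r m (a b : A), (N ^ r) (circN (N ^ (m + r)) a b)
      = circN (N ^ m) ((N ^ r) a) ((N ^ r) b) := by
  intro r
  induction r with
  | zero => intro m a b; simp [Module.End.one_apply]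
  | succ r ih =>
    intro m a b
    have e : m + (r + 1) = (m + r) + 1 := by omega
    rw [e, pow_succ, Module.End.mul_apply, F1 N hN (m + r) a b, ih m (N a) (N b)]
    simp only [Module.End.mul_apply]

lemma pow_nij (N : A →ₗ[K] A) (hN : IsNijenhuis N) (k : ℕ) : IsNijenhuis (N ^ k) := by
  intro a b
  have := Fiter N hN k 0 a b
  rwa [Nat.zero_add, pow_zero, circN_one] at this

lemma main_id (N : A →ₗ[K] A) (hN : IsNijenhuis N) (k r : ℕ) (h : r ≤ k) (a b : A) :
    (N ^ k) (circN (N ^ r) a b) + (N ^ r) (circN (N ^ k) a b) =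
      (N ^ k) a * (N ^ r) b + (N ^ r) a * (N ^ k) b := by
  obtain ⟨m, rfl⟩ : ∃ m, k = m + r := ⟨k - r, by omega⟩
  have e1 : (N ^ (m + r)) (circN (N ^ r) a b) = (N ^ m) ((N ^ r) a * (N ^ r) b) := by
    rw [pow_add, Module.End.mul_apply, pow_nij N hN r a b]
  have e2 := Fiter N hN r m a b
  rw [e1, e2, circN]
  have e3 : ∀ x : A, (N ^ m) ((N ^ r) x) = (N ^ (m + r)) x := by
    intro x; rw [pow_add, Module.End.mul_apply]
  rw [e3, e3]
  abel

lemma circN_add (P Q : A →ₗ[K] A) (a b : A) :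
    circN (P + Q) a b = circN P a b + circN Q a b := by
  simp only [circN, LinearMap.add_apply, add_mul, mul_add]
  abel

lemma add_nij (N : A →ₗ[K] A) (hN : IsNijenhuis N) (k r : ℕ) :
    IsNijenhuis ((N ^ k) + (N ^ r)) := by
  intro a b
  have hk := pow_nij N hN k a b
  have hr := pow_nij N hN r a b
  have hm : (N ^ k) (circN (N ^ r) a b) + (N ^ r) (circN (N ^ k) a b) =
      (N ^ k) a * (N ^ r) b + (N ^ r) a * (N ^ k) b := by
    rcases le_total r k with h | h
    · exact main_id N hN k r h a b
    · have := main_id N hN r k h a b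
      linear_combination (norm := abel1) this
  rw [circN_add]
  simp only [LinearMap.add_apply, map_add, add_mul, mul_add]
  linear_combination (norm := abel1) hk + hr + hm

lemma sum_sum_eq (s : Finset ℕ) (F G : ℕ → ℕ → A)
    (hdiag : ∀ k, F k k = G k k)
    (hsym : ∀ k r, F k r + F r k = G k r + G r k) :
    ∑ k ∈ s, ∑ r ∈ s, F k r = ∑ k ∈ s, ∑ r ∈ s, G k r := by
  rw [← sub_eq_zero, ← Finset.sum_sub_distrib]
  simp_rw [← Finset.sum_sub_distrib]
  rw [← Finset.sum_product']
  refine Finset.sum_involution (fun p _ => (p.2, p.1)) ?_ ?_ ?_ ?_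
  · intro p hp
    show F p.1 p.2 - G p.1 p.2 + (F p.2 p.1 - G p.2 p.1) = 0
    have := hsym p.1 p.2
    linear_combination (norm := abel1) this
  · intro p hp hne heq
    apply hne
    have h1 : p.2 = p.1 := congrArg Prod.fst heq
    show F p.1 p.2 - G p.1 p.2 = 0
    rw [h1, hdiag p.1, sub_self]
  · intro p hp
    exact Finset.mem_product.2
      ⟨(Finset.mem_product.1 hp).2, (Finset.mem_product.1 hp).1⟩
  · intro p hp; rfl

lemma sum_nij (N : A →ₗ[K] A) (hN : IsNijenhuis N) (s : Finset ℕ) (lam : ℕ → K) :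
    IsNijenhuis (∑ k ∈ s, lam k • (N ^ k)) := by
  intro a b
  set M : A →ₗ[K] A := ∑ k ∈ s, lam k • (N ^ k) with hM
  have happ : ∀ x : A, M x = ∑ k ∈ s, lam k • (N ^ k) x := by
    intro x
    rw [hM]
    simp [LinearMap.sum_apply, LinearMap.smul_apply]
  have hcirc : circN M a b = ∑ r ∈ s, lam r • circN (N ^ r) a b := by
    simp only [circN, happ, Finset.sum_mul, Finset.mul_sum, smul_mul_assoc, mul_smul_comm,
      ← Finset.sum_add_distrib, ← Finset.sum_sub_distrib, smul_add, smul_sub]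
  rw [hcirc, happ]
  have lhs : ∀ k ∈ s, lam k • (N ^ k) (∑ r ∈ s, lam r • circN (N ^ r) a b)
      = ∑ r ∈ s, (lam k * lam r) • ((N ^ k) (circN (N ^ r) a b)) := by
    intro k _
    rw [map_sum, Finset.smul_sum]
    refine Finset.sum_congr rfl fun r _ => ?_
    rw [map_smul, smul_smul]
  rw [Finset.sum_congr rfl lhs]
  have rhs : M a * M b = ∑ k ∈ s, ∑ r ∈ s, (lam k * lam r) • ((N ^ k) a * (N ^ r) b) := by
    rw [happ, happ, Finset.sum_mul]
    refine Finset.sum_congr rfl fun k _ => ?_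
    rw [Finset.mul_sum]
    refine Finset.sum_congr rfl fun r _ => ?_
    rw [smul_mul_assoc, mul_smul_comm, smul_smul]
  rw [rhs]
  refine sum_sum_eq s _ _ ?_ ?_
  · intro k
    rw [pow_nij N hN k a b]
  · intro k r
    rw [mul_comm (lam r) (lam k), ← smul_add, ← smul_add]
    congr 1
    rcases le_total r k with h | h
    · exact main_id N hN k r h a b
    · have := main_id N hN r k h a b
      linear_combination (norm := abel1) this

end Aux

/-- If `N` is a Nijenhuis tensor then for `k ≥ r`,
`N^k(A ∘_{N^r} B) + N^r(A ∘_{N^k} B) = N^k(A)·N^r(B) + N^r(A)·N^k(B)`;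
consequently all powers `N^k` are pairwise compatible Nijenhuis tensors and
every linear combination of the `N^k` is a Nijenhuis tensor. -/
theorem powers_pairwise_compatible
    {K A : Type*} [Field K] [NonUnitalRing A] [Module K A]
    [SMulCommClass K A A] [IsScalarTower K A A] (N : A →ₗ[K] A)
    (hN : IsNijenhuis N) :
    (∀ k r : ℕ, r ≤ k → ∀ a b : A,
      (N ^ k) (circN (N ^ r) a b) + (N ^ r) (circN (N ^ k) a b) =
        (N ^ k) a * (N ^ r) b + (N ^ r) a * (N ^ k) b) ∧
    (∀ k : ℕ, IsNijenhuis (N ^ k)) ∧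
    (∀ k r : ℕ, IsNijenhuis ((N ^ k) + (N ^ r))) ∧
    (∀ (s : Finset ℕ) (lam : ℕ → K), IsNijenhuis (∑ k ∈ s, lam k • (N ^ k))) :=
  ⟨fun k r h a b => main_id N hN k r h a b, pow_nij N hN, add_nij N hN, sum_nij N hN⟩
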